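/- Let (X,T) be a minimal topological dynamical system and let d ≥ 1 be an integer. Then there exists a dense G_δ set X_0 ⊆ X such that for every x ∈ X_0 one has Q^{[d]}[x] = cl F^{[d]}(x^{[d]}), i.e. the set of points of Q^{[d]}(X) whose (0,…,0)-coordinate equals x coincides with the closure of the F^{[d]}-orbit of the diagonal point x^{[d]}. -/

import Mathlib

open Set

/-- The group of self-homeomorphisms of a topological space,
with `(f * g) x = f (g x)`. -/
instance homeomorphGroup {X : Type*} [TopologicalSpace X] : Group (X ≃ₜ X) where
  mul f g := g.trans f
  one := Homeomorph.refl X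
  inv := Homeomorph.symm
  mul_assoc f g h := rfl
  one_mul f := by ext x; rfl
  mul_one f := by ext x; rfl
  inv_mul_cancel f := by ext x; exact f.symm_apply_apply x

/-- `n · ε = n₁ε₁ + ⋯ + n_dε_d`. -/
def nDot {d : ℕ} (n : Fin d → ℤ) (ε : Fin d → Bool) : ℤ :=
  ∑ i, if ε i then n i else 0

/-- The vertex `(0,…,0)` of the cube `{0,1}^d`. -/
def v0 (d : ℕ) : Fin d → Bool := fun _ => false

/-- A topological dynamical system `(X,T)` is minimal if every orbit is dense. -/
def IsMinimalTDS {X : Type*} [TopologicalSpace X] (T : X ≃ₜ X) : Prop :=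
  ∀ x : X, Dense (Set.range fun n : ℤ => (T ^ n) x)

/-- The dynamical parallelepiped `Q^{[d]}(X)`: the closure in `X^{[d]} = X^({0,1}^d)`
of the set of points `(T^{n·ε} x)_{ε ∈ {0,1}^d}`, `x ∈ X`, `n ∈ ℤ^d`. -/
def cubeQ {X : Type*} [TopologicalSpace X] (T : X ≃ₜ X) (d : ℕ) :
    Set ((Fin d → Bool) → X) :=
  closure {y | ∃ (x : X) (n : Fin d → ℤ), y = fun ε => (T ^ nDot n ε) x}

/-- The regionally proximal relation of order `k` (for `k = 0` this is all of `X × X`). -/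
def RP {X : Type*} [MetricSpace X] (T : X ≃ₜ X) (k : ℕ) : Set (X × X) :=
  {p | ∀ δ > 0, ∃ (x' y' : X) (n : Fin k → ℤ),
    dist p.1 x' < δ ∧ dist p.2 y' < δ ∧
    ∀ ε : Fin k → Bool, ε ≠ v0 k →
      dist ((T ^ nDot n ε) x') ((T ^ nDot n ε) y') < δ}

/-- A factor map between topological dynamical systems: a continuous surjection
intertwining the actions. -/
def IsFactorMap {X Z : Type*} [TopologicalSpace X] [TopologicalSpace Z]
    (T : X ≃ₜ X) (S : Z ≃ₜ Z) (π : X → Z) : Prop :=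
  Continuous π ∧ Function.Surjective π ∧ ∀ x, π (T x) = S (π x)

/-- The diagonal homeomorphism `T^{[d]} = T × ⋯ × T` of `X^{[d]}`. -/
def diagHomeo {X : Type*} [TopologicalSpace X] (T : X ≃ₜ X) (d : ℕ) :
    ((Fin d → Bool) → X) ≃ₜ ((Fin d → Bool) → X) :=
  Homeomorph.piCongrRight fun _ : Fin d → Bool => T

/-- `w` is a minimal point of the homeomorphism `S`. -/
def IsMinimalPoint {W : Type*} [TopologicalSpace W] (S : W ≃ₜ W) (w : W) : Prop :=
  ∀ y ∈ closure (Set.range fun n : ℤ => (S ^ n) w),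
    closure (Set.range fun n : ℤ => (S ^ n) y)
      = closure (Set.range fun n : ℤ => (S ^ n) w)

/-- The `j`-th face transformation `T_j^{[d]}` of `X^{[d]}`. -/
def faceHomeo {X : Type*} [TopologicalSpace X] {d : ℕ} (T : X ≃ₜ X) (j : Fin d) :
    ((Fin d → Bool) → X) ≃ₜ ((Fin d → Bool) → X) :=
  Homeomorph.piCongrRight fun ε : Fin d → Bool =>
    if ε j then T else Homeomorph.refl X

/-- The face group `F^{[d]}`: the group of homeomorphisms of `X^{[d]}`
generated by the face transformations. -/
def faceGroup {X : Type*} [TopologicalSpace X] (T : X ≃ₜ X) (d : ℕ) :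
    Subgroup (((Fin d → Bool) → X) ≃ₜ ((Fin d → Bool) → X)) :=
  Subgroup.closure (Set.range (faceHomeo (d := d) T))

/-- The orbit of a point under a group of homeomorphisms. -/
def groupOrbit {W : Type*} [TopologicalSpace W] (G : Subgroup (W ≃ₜ W)) (w : W) : Set W :=
  {y | ∃ g ∈ G, g w = y}

/-- The homeomorphism `id × T_*^{[d]}` of `X^{[d]}`, fixing the `(0,…,0)`-coordinate
and applying `T` to every other coordinate. -/
def idFaceHomeo {X : Type*} [TopologicalSpace X] (T : X ≃ₜ X) (d : ℕ) :
    ((Fin d → Bool) → X) ≃ₜ ((Fin d → Bool) → X) :=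
  Homeomorph.piCongrRight fun ε : Fin d → Bool =>
    if ε = v0 d then Homeomorph.refl X else T

/-!
For `u ∈ X^{[d]}` the function `x ↦ dist(u, F^{[d]}(x^{[d]}))` is an infimum of continuous
functions, hence upper semicontinuous, hence continuous on a residual set (Baire). These
functions are `1`-Lipschitz in `u`, so running `u` through a countable dense set gives a dense
`G_δ` set `X₀` of points at which all of them are continuous. A point `z ∈ Q^{[d]}(X)` with
`z_{(0,…,0)} = x` is a limit of points `(T^{n·ε} y)_ε ∈ F^{[d]}(y^{[d]})` with `y → x`, so
`dist(z, F^{[d]}(y^{[d]})) → 0`, and continuity at `x ∈ X₀` gives `z ∈ cl F^{[d]}(x^{[d]})`.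
-/

open Filter Topology Metric TopologicalSpace

section Generic

theorem UpperSemicontinuous.eventually_residual_continuousAt {X : Type*} [TopologicalSpace X]
    [BaireSpace X] {f : X → ℝ} (hf : UpperSemicontinuous f) (hbdd : BddBelow (range f)) :
    ∀ᶠ x in residual X, ContinuousAt f x := by
  set G : ℝ → Set X := fun e => ⋃₀ {U | IsOpen U ∧ ∀ a ∈ U, ∀ b ∈ U, f a ≤ f b + e}
  have hG_dense : ∀ e > 0, Dense (G e) := by
    intro e he
    refine dense_iff_inter_open.2 fun W hW ⟨x₀, hx₀⟩ => ?_
    set c := sInf (f '' W)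
    have hc : ∀ a ∈ W, c ≤ f a := fun a ha =>
      csInf_le (hbdd.mono (image_subset_range f W)) (mem_image_of_mem f ha)
    obtain ⟨_, ⟨x₁, hx₁, rfl⟩, hx₁c⟩ :=
      Real.lt_sInf_add_pos (⟨f x₀, x₀, hx₀, rfl⟩ : (f '' W).Nonempty) he
    -- on `V` the values of `f` lie in `[c, c + e)`
    set V := W ∩ f ⁻¹' Iio (c + e)
    have hV : IsOpen V ∧ ∀ a ∈ V, ∀ b ∈ V, f a ≤ f b + e := by
      refine ⟨hW.inter (upperSemicontinuous_iff_isOpen_preimage.1 hf _), fun a ha b hb => ?_⟩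
      have ha' : f a < c + e := ha.2
      linarith [hc b hb.1]
    exact ⟨x₁, hx₁, mem_sUnion.2 ⟨V, hV, hx₁, hx₁c⟩⟩
  have hG : ∀ᶠ x in residual X, ∀ k : ℕ, x ∈ G (1 / (k + 1)) :=
    eventually_countable_forall.2 fun k => residual_of_dense_open
      (isOpen_sUnion fun U hU => hU.1) (hG_dense _ Nat.one_div_pos_of_nat)
  filter_upwards [hG] with x hx
  refine Metric.continuousAt_iff'.2 fun ε hε => ?_
  obtain ⟨k, hk⟩ := exists_nat_one_div_lt hε
  obtain ⟨U, ⟨hU, hosc⟩, hxU⟩ := mem_sUnion.1 (hx k)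
  filter_upwards [hU.mem_nhds hxU] with y hy
  rw [Real.dist_eq, abs_lt]
  constructor <;> linarith [hosc x hxU y hy, hosc y hy x hxU]

variable {X Y ι : Type*} [TopologicalSpace X] [PseudoMetricSpace Y]

theorem upperSemicontinuous_infDist_range [Nonempty ι] {h : ι → X → Y}
    (hh : ∀ i, Continuous (h i)) (u : Y) :
    UpperSemicontinuous fun x => infDist u (range fun i => h i x) := by
  intro x c hc
  obtain ⟨_, ⟨i, rfl⟩, hi⟩ := (infDist_lt_iff (range_nonempty _)).1 hc
  filter_upwards [(continuous_const.dist (hh i)).continuousAt.eventually (gt_mem_nhds hi)]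
    with y hy
  exact (infDist_le_dist_of_mem (mem_range_self i)).trans_lt hy

theorem continuousAt_infDist_of_dense {S : X → Set Y} {D : Set Y} (hD : Dense D) {x : X}
    (hx : ∀ v ∈ D, ContinuousAt (fun y => infDist v (S y)) x) (u : Y) :
    ContinuousAt (fun y => infDist u (S y)) x := by
  refine continuousAt_of_locally_uniform_approx_of_continuousAt fun U hU => ?_
  obtain ⟨ε, hε, hεU⟩ := Metric.mem_uniformity_dist.1 hU
  obtain ⟨v, hvD, huv⟩ := hD.exists_dist_lt u hε
  refine ⟨univ, univ_mem, _, hx v hvD, fun y _ => hεU ?_⟩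
  exact ((lipschitz_infDist_pt (s := S y)).dist_le_mul u v).trans_lt (by simpa using huv)

theorem mem_closure_of_continuousAt_infDist {S : X → Set Y} {p : Y → X} (hp : Continuous p)
    (hpS : ∀ x, ∀ w ∈ S x, p w = x) {z : Y} (hz : z ∈ closure (⋃ x, S x)) {x : X}
    (hzx : p z = x) (hSx : (S x).Nonempty) (hx : ContinuousAt (fun y => infDist z (S y)) x) :
    z ∈ closure (S x) := by
  rw [mem_closure_iff_infDist_zero hSx]
  refine le_antisymm ?_ infDist_nonneg
  have := mem_closure_iff_nhdsWithin_neBot.1 hz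
  have hlim : Tendsto (fun w => infDist z (S (p w))) (𝓝[⋃ x, S x] z) (𝓝 (infDist z (S x))) :=
    hx.tendsto.comp (hzx ▸ hp.continuousAt.tendsto.mono_left nhdsWithin_le_nhds)
  have hdist : Tendsto (fun w => dist z w) (𝓝[⋃ x, S x] z) (𝓝 0) := by
    simpa using (((continuous_const (y := z)).dist continuous_id).tendsto z).mono_left
      nhdsWithin_le_nhds
  refine le_of_tendsto_of_tendsto hlim hdist (eventually_nhdsWithin_of_forall fun w hw => ?_)
  obtain ⟨y, hwy⟩ := mem_iUnion.1 hw
  show infDist z (S (p w)) ≤ dist z w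
  rw [hpS y w hwy]
  exact infDist_le_dist_of_mem hwy

theorem exists_dense_isGδ_fiber_closure_eq [T1Space X] [BaireSpace X] [SeparableSpace Y]
    [Nonempty ι] {h : ι → X → Y} (hh : ∀ i, Continuous (h i)) {p : Y → X} (hp : Continuous p)
    (hph : ∀ i x, p (h i x) = x) :
    ∃ X₀ : Set X, Dense X₀ ∧ IsGδ X₀ ∧ ∀ x ∈ X₀,
      {z ∈ closure (⋃ y, range fun i => h i y) | p z = x} = closure (range fun i => h i x) := by
  obtain ⟨D, hDc, hD⟩ := exists_countable_dense Y
  set S : X → Set Y := fun x => range fun i => h i x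
  have hres : (⋂ u ∈ D, {x | ContinuousAt (fun y => infDist u (S y)) x}) ∈ residual X :=
    (countable_bInter_mem hDc).2 fun u _ =>
      (upperSemicontinuous_infDist_range hh u).eventually_residual_continuousAt
        ⟨0, forall_mem_range.2 fun _ => infDist_nonneg⟩
  refine ⟨_, dense_of_mem_residual hres,
    .biInter hDc fun u _ => .setOfPred_continuousAt _, fun x hx => ?_⟩
  apply subset_antisymm
  · rintro z ⟨hz, hzx⟩
    have hcont := continuousAt_infDist_of_dense hD (mem_iInter₂.1 hx) z
    exact mem_closure_of_continuousAt_infDist hp (by rintro x _ ⟨i, rfl⟩; exact hph i x) hz hzx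
      (range_nonempty _) hcont
  · intro z hz
    exact ⟨closure_mono (subset_iUnion_of_subset x subset_rfl) hz,
      closure_minimal (range_subset_iff.2 fun i => hph i x) (isClosed_singleton.preimage hp) hz⟩

end Generic

section FaceGroup

variable {X : Type*} [TopologicalSpace X] (T : X ≃ₜ X) {d : ℕ}

theorem nDot_zero_left (ε : Fin d → Bool) : nDot 0 ε = 0 := by
  simp [nDot]

theorem nDot_add_left (n m : Fin d → ℤ) (ε : Fin d → Bool) :
    nDot (n + m) ε = nDot n ε + nDot m ε := by
  simp only [nDot, Pi.add_apply, ← Finset.sum_add_distrib]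
  exact Finset.sum_congr rfl fun i _ => by split <;> simp

theorem nDot_single_one (j : Fin d) (ε : Fin d → Bool) :
    nDot (Pi.single j 1) ε = if ε j then 1 else 0 := by
  rw [nDot, Finset.sum_eq_single j (fun i _ hij => by simp [hij]) (by simp)]
  simp

theorem nDot_v0 (n : Fin d → ℤ) : nDot n (v0 d) = 0 := by
  simp [nDot, v0]

variable (d) in
def faceHom : Multiplicative (Fin d → ℤ) →* (((Fin d → Bool) → X) ≃ₜ ((Fin d → Bool) → X)) where
  toFun n := Homeomorph.piCongrRight fun ε => T ^ nDot n.toAdd ε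
  map_one' := by
    ext w ε
    simp [nDot_zero_left]
  map_mul' n m := by
    ext w ε
    simp [nDot_add_left, zpow_add]

theorem faceHom_apply (n : Multiplicative (Fin d → ℤ)) (w : (Fin d → Bool) → X)
    (ε : Fin d → Bool) : faceHom T d n w ε = (T ^ nDot n.toAdd ε) (w ε) :=
  rfl

theorem faceHomeo_eq_faceHom (j : Fin d) :
    faceHomeo T j = faceHom T d (Multiplicative.ofAdd (Pi.single j 1)) := by
  ext w ε
  rw [faceHom_apply, toAdd_ofAdd, nDot_single_one]
  simp only [faceHomeo, Homeomorph.piCongrRight_apply]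
  split <;> simp

theorem faceGroup_eq_range_faceHom : faceGroup T d = (faceHom T d).range := by
  refine le_antisymm (Subgroup.closure_le _ |>.2 ?_) ?_
  · rintro _ ⟨j, rfl⟩
    exact ⟨_, (faceHomeo_eq_faceHom T j).symm⟩
  · rintro _ ⟨n, rfl⟩
    change n ∈ (faceGroup T d).comap (faceHom T d)
    rw [← ofAdd_toAdd n, ← Finset.univ_sum_single n.toAdd, ofAdd_sum]
    refine Subgroup.prod_mem _ fun j _ => ?_
    rw [← mul_one (n.toAdd j), ← smul_eq_mul, Pi.single_smul', ofAdd_zsmul]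
    refine zpow_mem ?_ _
    rw [Subgroup.mem_comap, ← faceHomeo_eq_faceHom]
    exact Subgroup.subset_closure (mem_range_self j)

theorem groupOrbit_faceGroup_diag (x : X) :
    groupOrbit (faceGroup T d) (fun _ => x) = range fun n ε => (T ^ nDot n ε) x := by
  ext z
  simp only [groupOrbit, faceGroup_eq_range_faceHom, MonoidHom.mem_range]
  constructor
  · rintro ⟨_, ⟨n, rfl⟩, rfl⟩
    exact ⟨n.toAdd, rfl⟩
  · rintro ⟨n, rfl⟩
    exact ⟨_, ⟨Multiplicative.ofAdd n, rfl⟩, rfl⟩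

theorem cubeQ_eq_closure_iUnion :
    cubeQ T d = closure (⋃ x, range fun (n : Fin d → ℤ) ε => (T ^ nDot n ε) x) := by
  rw [cubeQ]
  congr 1
  ext
  simp [eq_comm]

end FaceGroup

theorem statement11_general {X : Type*} [MetricSpace X] [CompactSpace X]
    (T : X ≃ₜ X)
    (d : ℕ) :
    ∃ X₀ : Set X, Dense X₀ ∧ IsGδ X₀ ∧ ∀ x ∈ X₀,
      {z ∈ cubeQ T d | z (v0 d) = x}
        = closure (groupOrbit (faceGroup T d) (fun _ => x)) := by
  have hcont (n : Fin d → ℤ) : Continuous fun x ε => (T ^ nDot n ε) x :=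
    continuous_pi fun ε => (T ^ nDot n ε).continuous
  have hbase (n : Fin d → ℤ) (x : X) : (T ^ nDot n (v0 d)) x = x := by
    rw [nDot_v0, zpow_zero]
    rfl
  obtain ⟨X₀, hdense, hGδ, hX₀⟩ :=
    exists_dense_isGδ_fiber_closure_eq hcont (continuous_apply (v0 d)) hbase
  refine ⟨X₀, hdense, hGδ, fun x hx => ?_⟩
  rw [cubeQ_eq_closure_iUnion, groupOrbit_faceGroup_diag]
  exact hX₀ x hx

/-- for a minimal system there is a dense `G_δ` set `X₀ ⊆ X` such that for
every `x ∈ X₀`, `Q^{[d]}[x]` coincides with the closure of the `F^{[d]}`-orbit of the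
diagonal point `x^{[d]}`. -/
theorem statement11 {X : Type*} [MetricSpace X] [CompactSpace X]
    (T : X ≃ₜ X) (hmin : IsMinimalTDS T)
    (d : ℕ) (hd : 1 ≤ d) :
    ∃ X₀ : Set X, Dense X₀ ∧ IsGδ X₀ ∧ ∀ x ∈ X₀,
      {z ∈ cubeQ T d | z (v0 d) = x}
        = closure (groupOrbit (faceGroup T d) (fun _ => x)) :=
  statement11_general T d
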